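/- In the i.i.d. concept model with P = N^r concepts and M = N^γ strokes (r, γ > 0, L and t fixed with t + ρ < (1−δ)L): (i) if γ > r/(t+1) and P(G_α(δ,ρ)^c) → 0, then P(α̂(x) ≠ α) → 0 for any fixed target α; the overlap error term P·C(L,t+1)·(L/M)^{t+1} is of order N^{r−γ(t+1)} → 0. -/

import Mathlib

open Filter Topology

/-! With `P = N^r` and `M = N^γ`, the overlap term `P · C(L,t+1) · (L/M)^(t+1)` is the constant
`C(L,t+1) · L^(t+1)` times `N^(r - γ(t+1))`, a negative power of `N` as soon as `γ(t+1) > r`.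
The retrieval error is squeezed between `0` and this term plus `P(G_α(δ,ρ)ᶜ)`. -/

theorem rpow_mul_mul_div_rpow_pow {x : ℝ} (hx : 0 < x) (r γ c a : ℝ) (k : ℕ) :
    x ^ r * c * (a / x ^ γ) ^ k = c * a ^ k * x ^ (r - γ * k) := by
  have hpow : (x ^ γ) ^ k = x ^ (γ * k) := by
    rw [← Real.rpow_natCast, ← Real.rpow_mul hx.le]
  rw [div_pow, hpow, Real.rpow_sub hx]
  have : 0 < x ^ (γ * k) := Real.rpow_pos_of_pos hx _
  field_simp

theorem tendsto_natCast_rpow_mul_mul_div_rpow_pow {r γ : ℝ} {k : ℕ} (h : r < γ * k) (c a : ℝ) :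
    Tendsto (fun N : ℕ => (N : ℝ) ^ r * c * (a / (N : ℝ) ^ γ) ^ k) atTop (𝓝 0) := by
  have hneg : Tendsto (fun N : ℕ => (N : ℝ) ^ (r - γ * k)) atTop (𝓝 0) := by
    simpa only [neg_sub, Function.comp_def] using
      (tendsto_rpow_neg_atTop (sub_pos.mpr h)).comp tendsto_natCast_atTop_atTop
  have hlim := hneg.const_mul (c * a ^ k)
  rw [mul_zero] at hlim
  refine hlim.congr' ?_
  filter_upwards [eventually_gt_atTop 0] with N hN
  exact (rpow_mul_mul_div_rpow_pow (Nat.cast_pos.mpr hN) r γ c a k).symm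

theorem ENNReal.tendsto_zero_of_le_ofReal_add {α : Type*} {l : Filter α} {f e : α → ENNReal}
    {g : α → ℝ} (hg : Tendsto g l (𝓝 0)) (he : Tendsto e l (𝓝 0))
    (hle : ∀ᶠ n in l, f n ≤ ENNReal.ofReal (g n) + e n) : Tendsto f l (𝓝 0) := by
  have hsum : Tendsto (fun n => ENNReal.ofReal (g n) + e n) l (𝓝 0) := by
    simpa using (ENNReal.tendsto_ofReal hg).add he
  exact tendsto_of_tendsto_of_tendsto_of_le_of_le' tendsto_const_nhds hsum
    (Eventually.of_forall fun _ => zero_le) hle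

theorem stmt10_general (L t : ℕ)
    (r γ : ℝ) (hγ : r / (t + 1) < γ)
    (err perr : ℕ → ENNReal)
    (herr : Tendsto err atTop (nhds 0))
    (hbound : ∀ N : ℕ, 2 ≤ N →
      perr N ≤ ENNReal.ofReal
          ((N : ℝ) ^ r * (L.choose (t + 1) : ℝ) * ((L : ℝ) / (N : ℝ) ^ γ) ^ (t + 1))
        + err N) :
    Tendsto (fun N : ℕ =>
        (N : ℝ) ^ r * (L.choose (t + 1) : ℝ) * ((L : ℝ) / (N : ℝ) ^ γ) ^ (t + 1))
      atTop (nhds 0) ∧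
    Tendsto perr atTop (nhds 0) := by
  have hexp : r < γ * ((t + 1 : ℕ) : ℝ) := by
    push_cast
    exact (div_lt_iff₀ (by positivity)).mp hγ
  have hoverlap := tendsto_natCast_rpow_mul_mul_div_rpow_pow hexp (L.choose (t + 1)) L
  refine ⟨hoverlap, ENNReal.tendsto_zero_of_le_ofReal_add hoverlap herr ?_⟩
  filter_upwards [eventually_ge_atTop 2] with N hN
  exact hbound N hN

/-- Polynomial growth regimes (fixed target concept): with `P = N^r` concepts and
`M = N^γ` strokes, fixed `L`, `t`, margin `t + ρ < (1-δ)L`, and `γ > r/(t+1)`: the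
overlap error term `N^r · C(L,t+1) · (L/N^γ)^(t+1)` tends to `0`, and whenever the
retrieval error is bounded by this term plus `P(G_α(δ,ρ)ᶜ) → 0`, the retrieval error
`P(α̂(x) ≠ α)` tends to `0`. -/
theorem stmt10 (L t ρ : ℕ) (δ : ℝ) (hδ0 : 0 < δ) (hδ1 : δ < 1) (ht : t ≤ L - 1)
    (hmargin : (t : ℝ) + (ρ : ℝ) < (1 - δ) * L)
    (r γ : ℝ) (hr : 0 < r) (hγ : r / (t + 1) < γ)
    (err perr : ℕ → ENNReal)
    (herr : Tendsto err atTop (nhds 0))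
    (hbound : ∀ N : ℕ, 2 ≤ N →
      perr N ≤ ENNReal.ofReal
          ((N : ℝ) ^ r * (L.choose (t + 1) : ℝ) * ((L : ℝ) / (N : ℝ) ^ γ) ^ (t + 1))
        + err N) :
    Tendsto (fun N : ℕ =>
        (N : ℝ) ^ r * (L.choose (t + 1) : ℝ) * ((L : ℝ) / (N : ℝ) ^ γ) ^ (t + 1))
      atTop (nhds 0) ∧
    Tendsto perr atTop (nhds 0) :=
  stmt10_general L t r γ hγ err perr herr hbound
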